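/- Let e_{m,k} (m ≥ 0, 0 ≤ k ≤ 2^m − 1) denote the Faber–Schauder functions on [0,1]: e_{m,k} is supported on [k 2^{-m}, (k+1) 2^{-m}], is piecewise linear with slope 2^{m/2} on [k 2^{-m}, (k + 1/2) 2^{-m}] and slope −2^{m/2} on [(k + 1/2) 2^{-m}, (k+1) 2^{-m}], and vanishes at the endpoints. Let (θ_{m,k}) be real coefficients such that X(t) = Σ_{m=0}^∞ Σ_{k=0}^{2^m − 1} θ_{m,k} e_{m,k}(t) converges uniformly on [0,1]. Then for every n ≥ 1, Σ_{j=0}^{2^n − 1} (X((j+1)/2^n) − X(j/2^n))² = 2^{-n} Σ_{m=0}^{n−1} Σ_{k=0}^{2^m − 1} θ_{m,k}². -/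

import Mathlib

/-!
At a dyadic point of level `n` only the terms with `m < n` of the series survive, because
`e_{m,k}` vanishes on the grid of level `m`. Refining the grid from level `n` to `n + 1`, the
identity `(M - L)² + (R - M)² = ((R - L)² + (2M - L - R)²) / 2` relates the quadratic
variation sums `Q_n` and `Q_{n+1}` through the second differences `2 X(M) - X(L) - X(R)`
over the intervals `[i 2⁻ⁿ, (i + 1) 2⁻ⁿ]`. Each `e_{m,k}` with `m < n` is affine on such an
interval, and among the functions of level `n` only `e_{n,i}` is not, so this second
difference is `θ_{n,i} 2^{-n/2}`. Hence `Q_{n+1} = (Q_n + 2⁻ⁿ Σ_i θ_{n,i}²) / 2` with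
`Q_0 = 0`, which solves to the claim.
-/

open Filter Topology

/-- The Faber–Schauder function `e_{m,k}` on `[0,1]`: supported on `[k 2⁻ᵐ, (k+1) 2⁻ᵐ]`,
piecewise linear with slope `2^{m/2}` on the left half of its support and slope `-2^{m/2}`
on the right half, vanishing at the endpoints. -/
noncomputable def faberSchauder (m k : ℕ) (t : ℝ) : ℝ :=
  (2 : ℝ) ^ ((m : ℝ) / 2) * max 0 (min (t - (k : ℝ) / 2 ^ m) (((k : ℝ) + 1) / 2 ^ m - t))

open Finset

noncomputable def tent (a b t : ℝ) : ℝ :=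
  max 0 (min (t - a) (b - t))

noncomputable def secondDiff (f : ℝ → ℝ) (L R : ℝ) : ℝ :=
  2 * f ((L + R) / 2) - f L - f R

section SecondDiff

variable {L R : ℝ}

lemma secondDiff_const_mul (c : ℝ) (f : ℝ → ℝ) :
    secondDiff (fun t => c * f t) L R = c * secondDiff f L R := by
  simp only [secondDiff]; ring

lemma secondDiff_sum {ι : Type*} (s : Finset ι) (f : ι → ℝ → ℝ) :
    secondDiff (fun t => ∑ i ∈ s, f i t) L R = ∑ i ∈ s, secondDiff (f i) L R := by
  simp only [secondDiff, mul_sum, ← sum_sub_distrib]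

variable {a b t : ℝ}

lemma tent_eq_zero_of_le_left (h : t ≤ a) : tent a b t = 0 :=
  max_eq_left (min_le_of_left_le (by linarith))

lemma tent_eq_zero_of_right_le (h : b ≤ t) : tent a b t = 0 :=
  max_eq_left (min_le_of_right_le (by linarith))

lemma tent_eq_sub_left (h₁ : a ≤ t) (h₂ : t ≤ (a + b) / 2) : tent a b t = t - a := by
  rw [tent, min_eq_left (by linarith), max_eq_right (by linarith)]

lemma tent_eq_sub_right (h₁ : (a + b) / 2 ≤ t) (h₂ : t ≤ b) : tent a b t = b - t := by
  rw [tent, min_eq_right (by linarith), max_eq_right (by linarith)]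

/-- A tent is affine on every interval `[L, R]` with none of its three breakpoints inside. -/
lemma tent_secondDiff_eq_zero (hLR : L ≤ R) (ha : R ≤ a ∨ a ≤ L)
    (hc : R ≤ (a + b) / 2 ∨ (a + b) / 2 ≤ L) (hb : R ≤ b ∨ b ≤ L) :
    secondDiff (tent a b) L R = 0 := by
  obtain ⟨α, β, haff⟩ : ∃ α β : ℝ, ∀ t, L ≤ t → t ≤ R → tent a b t = α * t + β := by
    rcases ha with ha | ha
    · exact ⟨0, 0, fun t _ ht => by rw [tent_eq_zero_of_le_left (ht.trans ha)]; ring⟩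
    rcases hb with hb | hb
    swap
    · exact ⟨0, 0, fun t ht _ => by rw [tent_eq_zero_of_right_le (hb.trans ht)]; ring⟩
    rcases hc with hc | hc
    · exact ⟨1, -a, fun t ht₁ ht₂ => by
        rw [tent_eq_sub_left (ha.trans ht₁) (ht₂.trans hc)]; ring⟩
    · exact ⟨-1, b, fun t ht₁ ht₂ => by
        rw [tent_eq_sub_right (hc.trans ht₁) (ht₂.trans hb)]; ring⟩
  rw [secondDiff, haff _ (by linarith) (by linarith), haff L le_rfl hLR, haff R hLR le_rfl]
  ring

lemma tent_secondDiff_self (hab : a ≤ b) : secondDiff (tent a b) a b = b - a := by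
  rw [secondDiff, tent_eq_sub_left (by linarith) le_rfl, tent_eq_zero_of_le_left le_rfl,
    tent_eq_zero_of_right_le le_rfl]
  ring

end SecondDiff

lemma natCast_div_two_pow_eq_of_le {n m : ℕ} (h : n ≤ m) (j : ℕ) :
    (j : ℝ) / 2 ^ n = ((j * 2 ^ (m - n) : ℕ) : ℝ) / 2 ^ m := by
  rw [← Nat.add_sub_cancel' h]
  push_cast
  rw [Nat.add_sub_cancel_left, pow_add]
  field_simp

lemma natCast_div_two_pow_le_or_le (n q i : ℕ) :
    ((i : ℝ) + 1) / 2 ^ n ≤ q / 2 ^ n ∨ (q : ℝ) / 2 ^ n ≤ i / 2 ^ n := by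
  rcases Nat.lt_or_ge i q with h | h
  · left; gcongr; exact_mod_cast h
  · right; gcongr

lemma natCast_div_two_pow_midpoint (n i : ℕ) :
    ((i : ℝ) / 2 ^ n + (i + 1) / 2 ^ n) / 2 = ((2 * i + 1 : ℕ) : ℝ) / 2 ^ (n + 1) := by
  push_cast
  rw [pow_succ]
  field_simp
  ring

lemma faberSchauder_eq_mul_tent (m k : ℕ) :
    faberSchauder m k = fun t => 2 ^ ((m : ℝ) / 2) * tent (k / 2 ^ m) ((k + 1) / 2 ^ m) t :=
  rfl

lemma faberSchauder_natCast_div_two_pow {n m : ℕ} (h : n ≤ m) (k j : ℕ) :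
    faberSchauder m k (j / 2 ^ n) = 0 := by
  rw [faberSchauder_eq_mul_tent, natCast_div_two_pow_eq_of_le h]
  beta_reduce
  rcases natCast_div_two_pow_le_or_le m (j * 2 ^ (m - n)) k with hq | hq
  · rw [tent_eq_zero_of_right_le hq, mul_zero]
  · rw [tent_eq_zero_of_le_left hq, mul_zero]

lemma faberSchauder_secondDiff {m n : ℕ} (hmn : m ≤ n) (k i : ℕ) :
    secondDiff (faberSchauder m k) (i / 2 ^ n) ((i + 1) / 2 ^ n)
      = if m = n ∧ k = i then 2 ^ ((n : ℝ) / 2) / 2 ^ n else 0 := by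
  have hab : (k : ℝ) / 2 ^ m ≤ (k + 1) / 2 ^ m := by gcongr; linarith
  rw [faberSchauder_eq_mul_tent, secondDiff_const_mul]
  rcases hmn.lt_or_eq with hlt | rfl
  · -- all three breakpoints of `e_{m,k}` are grid points of level `n`
    rw [if_neg (by omega), tent_secondDiff_eq_zero (by gcongr; linarith), mul_zero]
    · rw [natCast_div_two_pow_eq_of_le hlt.le]
      exact natCast_div_two_pow_le_or_le n _ i
    · rw [natCast_div_two_pow_midpoint, natCast_div_two_pow_eq_of_le hlt]
      exact natCast_div_two_pow_le_or_le n _ i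
    · rw [show (k : ℝ) + 1 = ((k + 1 : ℕ) : ℝ) by push_cast; ring,
        natCast_div_two_pow_eq_of_le hlt.le]
      exact natCast_div_two_pow_le_or_le n _ i
  by_cases hki : k = i
  · subst hki
    rw [if_pos ⟨rfl, rfl⟩, tent_secondDiff_self hab]
    ring
  rw [if_neg (by tauto)]
  have hdisj : (k + 1 : ℝ) / 2 ^ m ≤ i / 2 ^ m ∨ (i + 1 : ℝ) / 2 ^ m ≤ k / 2 ^ m := by
    rcases Nat.lt_or_gt_of_ne hki with h | h
    · left; gcongr; exact_mod_cast h
    · right; gcongr; exact_mod_cast h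
  have hLR : (i : ℝ) / 2 ^ m ≤ (i + 1) / 2 ^ m := by gcongr; linarith
  rw [tent_secondDiff_eq_zero hLR, mul_zero] <;> rcases hdisj with h | h
  all_goals first
    | (left; linarith)
    | (right; linarith)

section SchauderSeries

noncomputable def schauderPartialSum (θ : ℕ → ℕ → ℝ) (N : ℕ) (t : ℝ) : ℝ :=
  ∑ m ∈ range N, ∑ k ∈ range (2 ^ m), θ m k * faberSchauder m k t

variable {θ : ℕ → ℕ → ℝ}

lemma schauderPartialSum_natCast_div_two_pow_of_le {n N : ℕ} (h : n ≤ N) (j : ℕ) :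
    schauderPartialSum θ N (j / 2 ^ n) = schauderPartialSum θ n (j / 2 ^ n) := by
  unfold schauderPartialSum
  rw [← sum_range_add_sum_Ico _ h, add_eq_left]
  refine sum_eq_zero fun m hm => sum_eq_zero fun k _ => ?_
  rw [faberSchauder_natCast_div_two_pow (mem_Ico.mp hm).1, mul_zero]

lemma TendstoUniformlyOn.apply_natCast_div_two_pow_eq {X : ℝ → ℝ}
    (hunif : TendstoUniformlyOn (schauderPartialSum θ) X atTop (Set.Icc 0 1))
    {n j N : ℕ} (hj : j ≤ 2 ^ n) (hN : n ≤ N) :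
    X (j / 2 ^ n) = schauderPartialSum θ N (j / 2 ^ n) := by
  have ht : (j : ℝ) / 2 ^ n ∈ Set.Icc (0 : ℝ) 1 :=
    ⟨by positivity, (div_le_one (by positivity)).mpr (by exact_mod_cast hj)⟩
  refine tendsto_nhds_unique (hunif.tendsto_at ht) (tendsto_const_nhds.congr' ?_)
  filter_upwards [eventually_ge_atTop N] with M hM
  rw [schauderPartialSum_natCast_div_two_pow_of_le (hN.trans hM),
    schauderPartialSum_natCast_div_two_pow_of_le hN]

lemma schauderPartialSum_secondDiff {n i : ℕ} (hi : i < 2 ^ n) :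
    secondDiff (schauderPartialSum θ (n + 1)) (i / 2 ^ n) ((i + 1) / 2 ^ n)
      = θ n i * (2 ^ ((n : ℝ) / 2) / 2 ^ n) := by
  have hS : schauderPartialSum θ (n + 1)
      = fun t => ∑ m ∈ range (n + 1), ∑ k ∈ range (2 ^ m), θ m k * faberSchauder m k t := rfl
  simp only [hS, secondDiff_sum, secondDiff_const_mul]
  rw [sum_congr rfl fun m hm => sum_congr rfl fun k _ =>
    by rw [faberSchauder_secondDiff (Nat.lt_succ_iff.mp (mem_range.mp hm))]]
  simp [ite_and, hi]

end SchauderSeries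

noncomputable def dyadicQV (f : ℝ → ℝ) (n : ℕ) : ℝ :=
  ∑ j ∈ range (2 ^ n), (f ((j + 1) / 2 ^ n) - f (j / 2 ^ n)) ^ 2

lemma Finset.sum_range_two_mul {M : Type*} [AddCommMonoid M] (N : ℕ) (f : ℕ → M) :
    ∑ j ∈ range (2 * N), f j = ∑ i ∈ range N, (f (2 * i) + f (2 * i + 1)) := by
  induction N with
  | zero => simp
  | succ N ih =>
    rw [show 2 * (N + 1) = 2 * N + 1 + 1 by ring, sum_range_succ, sum_range_succ,
      sum_range_succ, ih, add_assoc]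

/-- Halving the mesh: `(M - L)² + (R - M)² = ((R - L)² + (2M - L - R)²) / 2`. -/
lemma dyadicQV_succ (f : ℝ → ℝ) (n : ℕ) :
    dyadicQV f (n + 1) = (dyadicQV f n
      + ∑ i ∈ range (2 ^ n), secondDiff f (i / 2 ^ n) ((i + 1) / 2 ^ n) ^ 2) / 2 := by
  rw [dyadicQV, dyadicQV, pow_succ', sum_range_two_mul, ← sum_add_distrib, sum_div]
  refine sum_congr rfl fun i _ => ?_
  have hL : ((2 * i : ℕ) : ℝ) / 2 ^ (n + 1) = i / 2 ^ n := by
    push_cast; rw [pow_succ]; field_simp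
  have hM₁ : (((2 * i : ℕ) : ℝ) + 1) / 2 ^ (n + 1) = (i / 2 ^ n + (i + 1) / 2 ^ n) / 2 := by
    push_cast; rw [pow_succ]; field_simp; ring
  have hM₂ : ((2 * i + 1 : ℕ) : ℝ) / 2 ^ (n + 1) = (i / 2 ^ n + (i + 1) / 2 ^ n) / 2 :=
    (natCast_div_two_pow_midpoint n i).symm
  have hR : (((2 * i + 1 : ℕ) : ℝ) + 1) / 2 ^ (n + 1) = (i + 1) / 2 ^ n := by
    push_cast; rw [pow_succ]; field_simp; ring
  rw [hL, hM₁, hM₂, hR, secondDiff]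
  ring

lemma eq_sum_div_two_pow_of_recurrence {Q s : ℕ → ℝ} (h₀ : Q 0 = 0)
    (hsucc : ∀ n, Q (n + 1) = (Q n + s n / 2 ^ n) / 2) (n : ℕ) :
    Q n = (∑ m ∈ range n, s m) / 2 ^ n := by
  induction n with
  | zero => simp [h₀]
  | succ n ih =>
    rw [hsucc, ih, sum_range_succ, pow_succ]
    field_simp

lemma TendstoUniformlyOn.secondDiff_eq {θ : ℕ → ℕ → ℝ} {X : ℝ → ℝ}
    (hunif : TendstoUniformlyOn (schauderPartialSum θ) X atTop (Set.Icc 0 1))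
    {n i : ℕ} (hi : i < 2 ^ n) :
    secondDiff X (i / 2 ^ n) ((i + 1) / 2 ^ n) = θ n i * (2 ^ ((n : ℝ) / 2) / 2 ^ n) := by
  rw [← schauderPartialSum_secondDiff hi, secondDiff, secondDiff, natCast_div_two_pow_midpoint,
    hunif.apply_natCast_div_two_pow_eq (by rw [pow_succ]; omega) le_rfl,
    hunif.apply_natCast_div_two_pow_eq hi.le (Nat.le_succ n)]
  have hR := hunif.apply_natCast_div_two_pow_eq (j := i + 1) hi (Nat.le_succ n)
  push_cast at hR
  rw [hR]

/-- If `X = Σ_{m,k} θ_{m,k} e_{m,k}` converges uniformly on `[0,1]`, then for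
every `n ≥ 1` the level-`n` dyadic quadratic variation sum of `X` equals
`2^{-n} Σ_{m<n} Σ_{k<2^m} θ_{m,k}²`. -/
theorem dyadic_qv_of_schauder_series
    (θ : ℕ → ℕ → ℝ) (X : ℝ → ℝ)
    (hunif : TendstoUniformlyOn
      (fun M t => ∑ m ∈ Finset.range M, ∑ k ∈ Finset.range (2 ^ m),
        θ m k * faberSchauder m k t)
      X atTop (Set.Icc 0 1)) :
    ∀ n : ℕ, 1 ≤ n →
      ∑ j ∈ Finset.range (2 ^ n),
          (X (((j : ℝ) + 1) / 2 ^ n) - X ((j : ℝ) / 2 ^ n)) ^ 2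
        = (∑ m ∈ Finset.range n, ∑ k ∈ Finset.range (2 ^ m), θ m k ^ 2) / 2 ^ n := by
  change TendstoUniformlyOn (schauderPartialSum θ) X atTop (Set.Icc 0 1) at hunif
  intro n _
  refine eq_sum_div_two_pow_of_recurrence (Q := dyadicQV X) ?_ (fun n => ?_) n
  · have h₀ := hunif.apply_natCast_div_two_pow_eq (n := 0) (j := 0) zero_le_one le_rfl
    have h₁ := hunif.apply_natCast_div_two_pow_eq (n := 0) (j := 1) le_rfl le_rfl
    norm_num [schauderPartialSum] at h₀ h₁
    norm_num [dyadicQV, h₀, h₁]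
  · have hsq : ((2 : ℝ) ^ ((n : ℝ) / 2)) ^ 2 = 2 ^ n := by
      rw [← Real.rpow_mul_natCast zero_le_two, Nat.cast_two, div_mul_cancel₀ _ two_ne_zero,
        Real.rpow_natCast]
    rw [dyadicQV_succ, sum_div]
    congr 2
    refine sum_congr rfl fun i hi => ?_
    rw [hunif.secondDiff_eq (mem_range.mp hi), mul_pow, div_pow, hsq]
    field_simp
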